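/- arXiv:2501.15399 — 8 statements merged into one kernel-verified Lean document; each statement's English description precedes it below -/
import Mathlib

section
/- Let f(x) = xᵀAx − 2aᵀx + θ be a convex quadratic function on ℝⁿ with A positive semidefinite and A ≠ 0. Then (graph f)• equals the epigraph of f, where graph f = {(x, f(x)) : x ∈ ℝⁿ} ⊆ ℝⁿ⁺¹ and (graph f)• is the set of convex combinations of pairs of points of graph f. -/
open Matrix

/-- The set of convex combinations of pairs of points of `D`. -/
def bullet {V : Type*} [AddCommGroup V] [Module ℝ V] (D : Set V) : Set V :=
  {x | ∃ u ∈ D, ∃ v ∈ D, ∃ l : ℝ, 0 ≤ l ∧ l ≤ 1 ∧ x = l • u + (1 - l) • v}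

/-!
The graph of a convex function always lies in its own epigraph after taking convex combinations
of two points, so only the reverse inclusion needs the quadratic structure. Since `A ≠ 0` is
positive semidefinite there is a direction `d` with `dᵀAd > 0`. By the parallelogram law
`f (x + y) + f (x - y) = 2 f x + 2 yᵀAy`, so a point `(x, t)` with `t ≥ f x` is the midpoint of
`(x ± s d, f (x ± s d))` once `s² dᵀAd = t - f x`.
-/

section Quadratic

variable {ι R : Type*} [Fintype ι] [CommRing R]

lemma quadratic_combination_sub {A : Matrix ι ι R} {a : ι → R} {θ : R} {f : (ι → R) → R}
    (hf : ∀ x, f x = x ⬝ᵥ A *ᵥ x - 2 * (a ⬝ᵥ x) + θ) (u v : ι → R) (l : R) :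
    l * f u + (1 - l) * f v - f (l • u + (1 - l) • v) = l * (1 - l) * ((u - v) ⬝ᵥ A *ᵥ (u - v)) := by
  simp only [hf, mulVec_add, mulVec_smul, mulVec_sub, dotProduct_add, add_dotProduct,
    dotProduct_sub, sub_dotProduct, smul_dotProduct, dotProduct_smul, smul_eq_mul]
  ring

lemma quadratic_add_add_sub {A : Matrix ι ι R} {a : ι → R} {θ : R} {f : (ι → R) → R}
    (hf : ∀ x, f x = x ⬝ᵥ A *ᵥ x - 2 * (a ⬝ᵥ x) + θ) (x y : ι → R) :
    f (x + y) + f (x - y) = 2 * f x + 2 * (y ⬝ᵥ A *ᵥ y) := by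
  simp only [hf, mulVec_add, mulVec_sub, dotProduct_add, add_dotProduct, dotProduct_sub,
    sub_dotProduct]
  ring

end Quadratic

section Real

variable {ι : Type*} [Fintype ι]

lemma Matrix.PosSemidef.exists_dotProduct_mulVec_pos {A : Matrix ι ι ℝ} (hA : A.PosSemidef)
    (hA0 : A ≠ 0) : ∃ d, 0 < d ⬝ᵥ A *ᵥ d := by
  classical
  by_contra! h
  refine hA0 (ext_of_mulVec_single fun i => ?_)
  rw [zero_mulVec, ← hA.dotProduct_mulVec_zero_iff, star_trivial]
  exact (h _).antisymm (hA.dotProduct_mulVec_nonneg _)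

lemma convexOn_quadratic {A : Matrix ι ι ℝ} (hA : A.PosSemidef) {a : ι → ℝ} {θ : ℝ}
    {f : (ι → ℝ) → ℝ} (hf : ∀ x, f x = x ⬝ᵥ A *ᵥ x - 2 * (a ⬝ᵥ x) + θ) :
    ConvexOn ℝ Set.univ f := by
  refine ⟨convex_univ, fun u _ v _ l m hl hm hlm => ?_⟩
  obtain rfl : m = 1 - l := by linarith
  have hgap := quadratic_combination_sub hf u v l
  have hq : 0 ≤ (u - v) ⬝ᵥ A *ᵥ (u - v) := hA.dotProduct_mulVec_nonneg _
  simp only [smul_eq_mul]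
  nlinarith [mul_nonneg (mul_nonneg hl hm) hq]

end Real

lemma bullet_graph_subset_epigraph {E : Type*} [AddCommGroup E] [Module ℝ E] {f : E → ℝ}
    (hf : ConvexOn ℝ Set.univ f) :
    bullet {p : E × ℝ | p.2 = f p.1} ⊆ {p : E × ℝ | f p.1 ≤ p.2} := by
  rintro _ ⟨⟨u, _⟩, rfl : _ = f u, ⟨v, _⟩, rfl : _ = f v, l, hl0, hl1, rfl⟩
  simpa using hf.2 (Set.mem_univ u) (Set.mem_univ v) hl0 (by linarith) (by ring)

lemma epigraph_subset_bullet_graph {ι : Type*} [Fintype ι] {A : Matrix ι ι ℝ} {a : ι → ℝ} {θ : ℝ}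
    {f : (ι → ℝ) → ℝ} (hf : ∀ x, f x = x ⬝ᵥ A *ᵥ x - 2 * (a ⬝ᵥ x) + θ) {d : ι → ℝ}
    (hd : 0 < d ⬝ᵥ A *ᵥ d) :
    {p : (ι → ℝ) × ℝ | f p.1 ≤ p.2} ⊆ bullet {p : (ι → ℝ) × ℝ | p.2 = f p.1} := by
  rintro ⟨x, t⟩ (hxt : f x ≤ t)
  set s := √((t - f x) / (d ⬝ᵥ A *ᵥ d))
  have hs : (s • d) ⬝ᵥ A *ᵥ (s • d) = t - f x := by
    rw [mulVec_smul, dotProduct_smul, smul_dotProduct, smul_smul, smul_eq_mul, ← sq,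
      Real.sq_sqrt (div_nonneg (by linarith) hd.le), div_mul_cancel₀ _ hd.ne']
  refine ⟨(x + s • d, f (x + s • d)), rfl, (x - s • d, f (x - s • d)), rfl, 1 / 2, by norm_num, by norm_num, ?_⟩
  have hpar := quadratic_add_add_sub hf x (s • d)
  refine Prod.ext ?_ ?_
  · simp only [Prod.fst_add, Prod.smul_fst]
    module
  · simp only [Prod.snd_add, Prod.smul_snd, smul_eq_mul]
    linarith

theorem stmt4 (n : ℕ) (A : Matrix (Fin n) (Fin n) ℝ) (a : Fin n → ℝ) (θ : ℝ)
    (hA : A.PosSemidef) (hA0 : A ≠ 0)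
    (f : (Fin n → ℝ) → ℝ)
    (hf : ∀ x, f x = x ⬝ᵥ A.mulVec x - 2 * (a ⬝ᵥ x) + θ) :
    bullet {p : (Fin n → ℝ) × ℝ | p.2 = f p.1} = {p : (Fin n → ℝ) × ℝ | f p.1 ≤ p.2} := by
  obtain ⟨d, hd⟩ := hA.exists_dotProduct_mulVec_pos hA0
  exact (bullet_graph_subset_epigraph (convexOn_quadratic hA hf)).antisymm
    (epigraph_subset_bullet_graph hf hd)
end

section
/- Let f(x) = xᵀAx − 2aᵀx + θ be a concave quadratic function on ℝⁿ with A negative semidefinite and A ≠ 0. Then (graph f)• equals the hypograph of f. -/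
/-!
The inclusion `⊆` is concavity of `f`, read off from
`q(λu + (1-λ)v) = λ q(u) + (1-λ) q(v) - λ(1-λ) q(u - v)` for `q(x) = xᵀAx`.
For `⊇`, a nonzero negative semidefinite `A` has a direction `d` with `q(d) < 0`; the average of
`f` at `x ± s d` is `f(x) + s² q(d)`, which takes every value `≤ f(x)` as `s` varies.
-/

open Matrix

section Graph

variable {V : Type*} [AddCommGroup V] [Module ℝ V]

theorem bullet_graph_subset_hypograph {f : V → ℝ} (hf : ConcaveOn ℝ Set.univ f) :
    bullet {p : V × ℝ | p.2 = f p.1} ⊆ {p : V × ℝ | p.2 ≤ f p.1} := by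
  rintro _ ⟨⟨u, _⟩, (rfl : _ = f u), ⟨v, _⟩, (rfl : _ = f v), l, hl0, hl1, rfl⟩
  simpa using hf.2 (Set.mem_univ u) (Set.mem_univ v) hl0 (sub_nonneg.2 hl1) (by ring)

theorem mk_average_mem_bullet_graph (f : V → ℝ) (x d : V) :
    (x, (f (x + d) + f (x - d)) / 2) ∈ bullet {p : V × ℝ | p.2 = f p.1} := by
  refine ⟨(x + d, f (x + d)), rfl, (x - d, f (x - d)), rfl, 1 / 2, by norm_num, by norm_num, ?_⟩
  ext
  · simp only [Prod.fst_add, Prod.smul_fst]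
    module
  · simp only [Prod.snd_add, Prod.smul_snd, smul_eq_mul]
    ring

end Graph

section Quadratic

variable {ι : Type*} [Fintype ι]

theorem dotProduct_mulVec_combination (A : Matrix ι ι ℝ) (u v : ι → ℝ) {a b : ℝ}
    (hab : a + b = 1) :
    (a • u + b • v) ⬝ᵥ A *ᵥ (a • u + b • v) =
      a * (u ⬝ᵥ A *ᵥ u) + b * (v ⬝ᵥ A *ᵥ v) - a * b * ((u - v) ⬝ᵥ A *ᵥ (u - v)) := by
  obtain rfl : b = 1 - a := by linarith
  simp only [mulVec_add, mulVec_sub, mulVec_smul, dotProduct_add, dotProduct_sub,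
    add_dotProduct, sub_dotProduct, dotProduct_smul, smul_dotProduct, smul_eq_mul]
  ring

theorem dotProduct_mulVec_add_smul (A : Matrix ι ι ℝ) (x d : ι → ℝ) (s : ℝ) :
    (x + s • d) ⬝ᵥ A *ᵥ (x + s • d) =
      x ⬝ᵥ A *ᵥ x + s * (x ⬝ᵥ A *ᵥ d + d ⬝ᵥ A *ᵥ x) + s ^ 2 * (d ⬝ᵥ A *ᵥ d) := by
  simp only [mulVec_add, mulVec_smul, dotProduct_add, add_dotProduct, dotProduct_smul,
    smul_dotProduct, smul_eq_mul]
  ring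

theorem concaveOn_quadratic {A : Matrix ι ι ℝ} (hA : (-A).PosSemidef) (a : ι → ℝ) (θ : ℝ) :
    ConcaveOn ℝ Set.univ (fun x => x ⬝ᵥ A *ᵥ x - 2 * (a ⬝ᵥ x) + θ) := by
  refine ⟨convex_univ, fun u _ v _ s t hs ht hst => ?_⟩
  obtain rfl : t = 1 - s := by linarith
  have hneg : (u - v) ⬝ᵥ A *ᵥ (u - v) ≤ 0 := by
    simpa [neg_mulVec] using hA.dotProduct_mulVec_nonneg (u - v)
  simp only [dotProduct_mulVec_combination A u v hst, dotProduct_add, dotProduct_smul,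
    smul_eq_mul]
  nlinarith [mul_nonneg hs ht]

theorem exists_dotProduct_mulVec_neg {A : Matrix ι ι ℝ} (hA : (-A).PosSemidef) (hA0 : A ≠ 0) :
    ∃ d : ι → ℝ, d ⬝ᵥ A *ᵥ d < 0 := by
  by_contra! h
  refine hA0 (ext_iff_mulVec.2 fun d => ?_)
  have hd : d ⬝ᵥ (-A) *ᵥ d = 0 :=
    le_antisymm (by simpa [neg_mulVec] using h d) (by simpa using hA.dotProduct_mulVec_nonneg d)
  simpa [neg_mulVec] using (hA.dotProduct_mulVec_zero_iff d).1 (by simpa using hd)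

end Quadratic

theorem stmt5 (n : ℕ) (A : Matrix (Fin n) (Fin n) ℝ) (a : Fin n → ℝ) (θ : ℝ)
    (hA : (-A).PosSemidef) (hA0 : A ≠ 0)
    (f : (Fin n → ℝ) → ℝ)
    (hf : ∀ x, f x = x ⬝ᵥ A.mulVec x - 2 * (a ⬝ᵥ x) + θ) :
    bullet {p : (Fin n → ℝ) × ℝ | p.2 = f p.1} = {p : (Fin n → ℝ) × ℝ | p.2 ≤ f p.1} := by
  have hconcave : ConcaveOn ℝ Set.univ f := by
    simpa only [← hf] using concaveOn_quadratic hA a θ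
  refine (bullet_graph_subset_hypograph hconcave).antisymm ?_
  rintro ⟨x, t⟩ (ht : t ≤ f x)
  obtain ⟨d, hd⟩ := exists_dotProduct_mulVec_neg hA hA0
  set s := √((f x - t) / -(d ⬝ᵥ A *ᵥ d))
  have hs : s ^ 2 * (d ⬝ᵥ A *ᵥ d) = t - f x := by
    rw [Real.sq_sqrt (div_nonneg (by linarith) (by linarith))]
    field_simp [hd.ne]
    ring
  have hsum : f (x + s • d) + f (x - s • d) = 2 * f x + 2 * s ^ 2 * (d ⬝ᵥ A *ᵥ d) := by
    simp only [hf, sub_eq_add_neg x, ← neg_smul, dotProduct_mulVec_add_smul, dotProduct_add,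
      dotProduct_smul, smul_eq_mul]
    ring
  convert mk_average_mem_bullet_graph f x (s • d)
  linarith
end

section
/- Let g(x) = xᵀx − 2aᵀx + θ and gᵢ(x) = xᵀx − 2aᵢᵀx + θᵢ for i = 1,…,m, with a, aᵢ ∈ ℝⁿ and θ, θᵢ ∈ ℝ. If rank{a₁−a, …, aₘ−a} ≤ n−1, then the joint numerical range G(ℝⁿ) = {(−g(x), g₁(x), …, gₘ(x)) : x ∈ ℝⁿ} ⊆ ℝ^{m+1} is convex. -/
open Matrix

private lemma dp_self_nonneg {n : ℕ} (v : Fin n → ℝ) : 0 ≤ v ⬝ᵥ v :=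
  Finset.sum_nonneg fun i _ => mul_self_nonneg _

theorem stmt7 (n m : ℕ) (a : Fin n → ℝ) (aa : Fin m → (Fin n → ℝ)) (θ : ℝ) (θθ : Fin m → ℝ)
    (g : (Fin n → ℝ) → ℝ) (gg : Fin m → (Fin n → ℝ) → ℝ)
    (hg : ∀ x, g x = x ⬝ᵥ x - 2 * (a ⬝ᵥ x) + θ)
    (hgg : ∀ i x, gg i x = x ⬝ᵥ x - 2 * (aa i ⬝ᵥ x) + θθ i)
    (hrank : Module.finrank ℝ (Submodule.span ℝ (Set.range fun i => aa i - a)) ≤ n - 1) :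
    Convex ℝ (Set.range fun x : Fin n → ℝ =>
      (Fin.cons (-(g x)) (fun i : Fin m => gg i x) : Fin (m + 1) → ℝ)) := by
  rcases Nat.eq_zero_or_pos n with hn | hn
  · subst hn
    apply Set.Subsingleton.convex
    rintro p ⟨x, rfl⟩ q ⟨y, rfl⟩
    have hxy : x = y := Subsingleton.elim x y
    rw [hxy]
  -- find a nonzero vector u orthogonal to all aa i - a
  obtain ⟨u, hu0, hu⟩ : ∃ u : Fin n → ℝ, u ≠ 0 ∧ ∀ i, aa i ⬝ᵥ u = a ⬝ᵥ u := by
    set M : Matrix (Fin m) (Fin n) ℝ := Matrix.of (fun i => aa i - a) with hM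
    have hrk : M.rank ≤ n - 1 := by
      rw [Matrix.rank_eq_finrank_span_row]
      exact hrank
    have hker : LinearMap.ker M.mulVecLin ≠ ⊥ := by
      intro h
      have h1 := LinearMap.finrank_range_add_finrank_ker M.mulVecLin
      rw [h, finrank_bot, add_zero, Module.finrank_fin_fun] at h1
      have h2 : M.rank = n := h1
      omega
    obtain ⟨u, huk, hu0⟩ := (Submodule.ne_bot_iff _).mp hker
    refine ⟨u, hu0, fun i => ?_⟩
    have := congrFun (LinearMap.mem_ker.mp huk) i
    simp only [Matrix.mulVecLin_apply, Matrix.mulVec, hM, Matrix.of_apply,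
      Pi.zero_apply] at this
    have h3 : (aa i - a) ⬝ᵥ u = 0 := this
    rw [sub_dotProduct] at h3
    linarith
  have hk : (0:ℝ) < u ⬝ᵥ u := by
    rcases lt_or_eq_of_le (dp_self_nonneg u) with h | h
    · exact h
    · exact absurd (dotProduct_self_eq_zero.mp h.symm) hu0
  rintro p ⟨y, rfl⟩ q ⟨z, rfl⟩ s t hs ht hst
  set k : ℝ := u ⬝ᵥ u with hkdef
  set w : Fin n → ℝ := s • y + t • z with hw
  set E : ℝ := s * g y + t * g z - g w with hE
  have hEnn : 0 ≤ E := by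
    have hyz : y ⬝ᵥ z = z ⬝ᵥ y := dotProduct_comm _ _
    have hexp : E = s * t * ((y - z) ⬝ᵥ (y - z)) := by
      rw [hE, hw, hg, hg, hg]
      simp only [dotProduct_add, add_dotProduct, dotProduct_smul, smul_dotProduct,
        smul_eq_mul, sub_dotProduct, dotProduct_sub]
      have ht1 : t = 1 - s := by linarith
      rw [ht1, hyz]
      ring
    rw [hexp]
    exact mul_nonneg (mul_nonneg hs ht) (dp_self_nonneg _)
  set b : ℝ := u ⬝ᵥ w - u ⬝ᵥ a with hb
  set D : ℝ := b ^ 2 + k * E with hD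
  have hDnn : 0 ≤ D := by
    have := sq_nonneg b
    nlinarith
  set r : ℝ := (-b + Real.sqrt D) / k with hr
  have hquad : k * r ^ 2 + 2 * b * r = E := by
    have hs2 : Real.sqrt D ^ 2 = D := Real.sq_sqrt hDnn
    rw [hr]
    field_simp
    nlinarith [hs2]
  set x : Fin n → ℝ := w + r • u with hx
  have hgx : g x = s * g y + t * g z := by
    have h1 : g x = g w + 2 * b * r + k * r ^ 2 := by
      rw [hx, hg, hg]
      simp only [dotProduct_add, add_dotProduct, dotProduct_smul, smul_dotProduct,
        smul_eq_mul]
      rw [hb, hkdef]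
      have h2 : w ⬝ᵥ u = u ⬝ᵥ w := dotProduct_comm _ _
      have h3 : a ⬝ᵥ u = u ⬝ᵥ a := dotProduct_comm _ _
      rw [h2, h3]
      ring
    rw [h1]
    have : E = s * g y + t * g z - g w := hE
    linarith [hquad]
  refine ⟨x, ?_⟩
  funext j
  refine Fin.cases ?_ ?_ j
  · simp only [Fin.cons_zero, Pi.add_apply, Pi.smul_apply, smul_eq_mul]
    rw [hgx]; ring
  · intro i
    simp only [Fin.cons_succ, Pi.add_apply, Pi.smul_apply, smul_eq_mul]
    have hax : a ⬝ᵥ x = s * (a ⬝ᵥ y) + t * (a ⬝ᵥ z) + r * (a ⬝ᵥ u) := by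
      rw [hx, hw]
      simp only [dotProduct_add, dotProduct_smul, smul_eq_mul]
    have haix : aa i ⬝ᵥ x = s * (aa i ⬝ᵥ y) + t * (aa i ⬝ᵥ z) + r * (a ⬝ᵥ u) := by
      rw [hx, hw]
      simp only [dotProduct_add, dotProduct_smul, smul_eq_mul]
      rw [hu i]
    have hxx : x ⬝ᵥ x = s * g y + t * g z + 2 * (a ⬝ᵥ x) - θ := by
      have := hg x
      linarith [hgx]
    rw [hgg, hgg, hgg, hg, hg] at *
    linear_combination hxx - 2 * haix + 2 * hax + (θ - θθ i) * hst
end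

section
/- Let g(x) = xᵀx − 2aᵀx + θ and gᵢ(x) = xᵀx − 2aᵢᵀx + θᵢ for i = 1,…,m. If the joint numerical range G(ℝⁿ) = {(−g(x), g₁(x), …, gₘ(x)) : x ∈ ℝⁿ} is convex, then rank{a₁−a, …, aₘ−a} ≤ n−1. -/
open Matrix

theorem stmt8 (n m : ℕ) (hn : 1 ≤ n)
    (a : Fin n → ℝ) (aa : Fin m → (Fin n → ℝ)) (θ : ℝ) (θθ : Fin m → ℝ)
    (g : (Fin n → ℝ) → ℝ) (gg : Fin m → (Fin n → ℝ) → ℝ)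
    (hg : ∀ x, g x = x ⬝ᵥ x - 2 * (a ⬝ᵥ x) + θ)
    (hgg : ∀ i x, gg i x = x ⬝ᵥ x - 2 * (aa i ⬝ᵥ x) + θθ i)
    (hconv : Convex ℝ (Set.range fun x : Fin n → ℝ =>
      (Fin.cons (-(g x)) (fun i : Fin m => gg i x) : Fin (m + 1) → ℝ))) :
    Module.finrank ℝ (Submodule.span ℝ (Set.range fun i => aa i - a)) ≤ n - 1 := by
  by_contra hcon
  push_neg at hcon
  set S := Submodule.span ℝ (Set.range fun i => aa i - a) with hS
  have hle : Module.finrank ℝ S ≤ n :=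
    (Submodule.finrank_le S).trans_eq (Module.finrank_fin_fun ℝ)
  have hrank : Module.finrank ℝ S = n := by omega
  have htop : S = ⊤ := by
    apply Submodule.eq_top_of_finrank_eq
    rw [hrank, Module.finrank_fin_fun]
  set v : Fin n → ℝ := Pi.single (⟨0, hn⟩ : Fin n) 1 with hv
  have hvv : v ⬝ᵥ v = 1 := by
    simp [hv, single_dotProduct]
  obtain ⟨y, hy⟩ := hconv (Set.mem_range_self (0 : Fin n → ℝ)) (Set.mem_range_self v)
      (by norm_num : (0:ℝ) ≤ 1/2) (by norm_num : (0:ℝ) ≤ 1/2) (by norm_num)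
  have h0 : -(g y) = (1/2) * (-(g 0)) + (1/2) * (-(g v)) := by
    simpa using congrFun hy 0
  have hi : ∀ i, gg i y = (1/2) * gg i 0 + (1/2) * gg i v := by
    intro i
    simpa using congrFun hy (Fin.succ i)
  set w : Fin n → ℝ := y - (1/2 : ℝ) • v with hw
  have hwi : ∀ i, (aa i - a) ⬝ᵥ w = 0 := by
    intro i
    have h1 := hi i
    rw [hgg, hgg, hgg] at h1
    have h2 := h0
    rw [hg, hg, hg] at h2
    simp only [zero_dotProduct, dotProduct_zero] at h1 h2
    have : (aa i - a) ⬝ᵥ w =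
        aa i ⬝ᵥ y - a ⬝ᵥ y - ((1/2) * (aa i ⬝ᵥ v) - (1/2) * (a ⬝ᵥ v)) := by
      simp [hw, sub_dotProduct, dotProduct_sub, dotProduct_smul,
        smul_eq_mul]
      ring
    rw [this]
    linarith
  have hwmem : w ∈ S := htop ▸ Submodule.mem_top
  have hdot : ∀ u ∈ S, u ⬝ᵥ w = 0 := by
    intro u hu
    refine Submodule.span_induction ?_ ?_ ?_ ?_ hu
    · rintro _ ⟨i, rfl⟩; exact hwi i
    · simp
    · intro x y _ _ hx hy; simp [add_dotProduct, hx, hy]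
    · intro c x _ hx; simp [smul_dotProduct, hx]
  have hw0 : w = 0 := by
    have := hdot w hwmem
    exact dotProduct_self_eq_zero.mp this
  have hy2 : y = (1/2 : ℝ) • v := by
    have := sub_eq_zero.mp hw0
    simpa using this
  rw [hy2, hg, hg, hg] at h0
  simp only [zero_dotProduct, dotProduct_zero, smul_dotProduct,
    dotProduct_smul, smul_eq_mul, hvv] at h0
  linarith
end

section
/- Suppose m = n and the vectors a₁−a, …, aₙ−a are linearly independent in ℝⁿ. Define H : ℝ^{n+1} → ℝ^{n+1} by H(z₀, z₁, …, zₙ) = (z₁+z₀, …, zₙ+z₀, −z₀). Then H(G(ℝⁿ)) = {(y, ḡ(y)) : y ∈ ℝⁿ}, the graph of a strictly convex quadratic function ḡ, where y = Ax + θ̂ with A the n×n matrix whose i-th row is −2(aᵢ−a)ᵀ and θ̂ = (θ₁−θ, …, θₙ−θ)ᵀ, and ḡ(y) = g(A⁻¹(y − θ̂)) is a quadratic with positive definite quadratic part (A⁻¹)ᵀA⁻¹. -/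
/-!
Subtracting `g` from each `gᵢ` cancels the common term `xᵀx`, so the first `n` coordinates of
`H (G x)` are the affine function `y = A x + θ̂` of `x`, while the last one is `g x`. The rows of
`A` are `-2 (aᵢ - a)`, hence `A` is invertible, `x = A⁻¹ (y - θ̂)`, and `H (G ℝⁿ)` is the graph of
`ḡ = g ∘ (y ↦ A⁻¹ (y - θ̂))`. Its quadratic part `(A⁻¹)ᵀ A⁻¹` is a Gram matrix of an invertible
matrix, hence positive definite.
-/

open Matrix

namespace Matrix

variable {ι R : Type*} [Fintype ι] [DecidableEq ι] [CommRing R]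

noncomputable def mulVecAddEquiv (A : Matrix ι ι R) (hA : IsUnit A.det) (c : ι → R) :
    (ι → R) ≃ (ι → R) where
  toFun x := A *ᵥ x + c
  invFun y := A⁻¹ *ᵥ (y - c)
  left_inv x := by simp [mulVec_mulVec, nonsing_inv_mul A hA]
  right_inv y := by simp [mulVec_mulVec, mul_nonsing_inv A hA]

theorem isUnit_det_smul_of_linearIndependent_rows {K : Type*} [Field K] {k : K} (hk : k ≠ 0)
    {v : ι → ι → K} (hv : LinearIndependent K v) : IsUnit (k • Matrix.of v).det := by
  rw [← isUnit_iff_isUnit_det, ← linearIndependent_rows_iff_isUnit]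
  exact hv.units_smul fun _ ↦ Units.mk0 k hk

end Matrix

theorem quadratic_sub_quadratic_eq_dotProduct_add {ι R : Type*} [Fintype ι] [CommRing R]
    (a b x : ι → R) (s t : R) :
    (x ⬝ᵥ x - 2 * (b ⬝ᵥ x) + s) - (x ⬝ᵥ x - 2 * (a ⬝ᵥ x) + t) =
      ((-2 : R) • (b - a)) ⬝ᵥ x + (s - t) := by
  simp only [smul_dotProduct, sub_dotProduct, smul_eq_mul]
  ring

theorem Fin.range_snoc_equiv {R α : Type*} {n : ℕ} (e : α ≃ (Fin n → R)) (f : α → R) :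
    Set.range (fun x ↦ (Fin.snoc (e x) (f x) : Fin (n + 1) → R)) =
      {w | w (Fin.last n) = f (e.symm (Fin.init w))} := by
  ext w
  constructor
  · rintro ⟨x, rfl⟩
    simp [Fin.init_snoc]
  · intro hw
    refine ⟨e.symm (Fin.init w), ?_⟩
    dsimp only
    rw [e.apply_symm_apply, ← hw.out, Fin.snoc_init_self]

theorem stmt10 (n : ℕ)
    (a : Fin n → ℝ) (aa : Fin n → (Fin n → ℝ)) (θ : ℝ) (θθ : Fin n → ℝ)
    (hind : LinearIndependent ℝ (fun i : Fin n => aa i - a))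
    (g : (Fin n → ℝ) → ℝ) (gg : Fin n → (Fin n → ℝ) → ℝ)
    (hg : ∀ x, g x = x ⬝ᵥ x - 2 * (a ⬝ᵥ x) + θ)
    (hgg : ∀ i x, gg i x = x ⬝ᵥ x - 2 * (aa i ⬝ᵥ x) + θθ i)
    (A : Matrix (Fin n) (Fin n) ℝ) (hA : ∀ i j, A i j = -2 * (aa i j - a j))
    (θhat : Fin n → ℝ) (hθhat : ∀ i, θhat i = θθ i - θ)
    (gbar : (Fin n → ℝ) → ℝ) (hgbar : ∀ y, gbar y = g (A⁻¹.mulVec (y - θhat)))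
    (H : (Fin (n + 1) → ℝ) → (Fin (n + 1) → ℝ))
    (hH : ∀ z, H z = Fin.snoc (fun i : Fin n => z i.succ + z 0) (-(z 0))) :
    (H '' Set.range (fun x : Fin n → ℝ =>
        (Fin.cons (-(g x)) (fun i : Fin n => gg i x) : Fin (n + 1) → ℝ))
      = {w : Fin (n + 1) → ℝ | w (Fin.last n) = gbar (fun i : Fin n => w i.castSucc)}) ∧
    (A⁻¹ᵀ * A⁻¹).PosDef := by
  have hA_eq : A = (-2 : ℝ) • Matrix.of fun i ↦ aa i - a := by
    ext i j
    simp [hA]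
  have hdet : IsUnit A.det :=
    hA_eq ▸ isUnit_det_smul_of_linearIndependent_rows (by norm_num) hind
  have hHG : ∀ x, H (Fin.cons (-(g x)) fun i ↦ gg i x) =
      Fin.snoc (mulVecAddEquiv A hdet θhat x) (g x) := by
    intro x
    rw [hH]
    congr 1
    · ext i
      simp only [Fin.cons_succ, Fin.cons_zero, ← sub_eq_add_neg, hgg, hg,
        quadratic_sub_quadratic_eq_dotProduct_add, mulVecAddEquiv, Equiv.coe_fn_mk, Pi.add_apply,
        hθhat, hA_eq]
      rfl
    · simp only [Fin.cons_zero, neg_neg]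
  refine ⟨?_, ?_⟩
  · rw [← Set.range_comp, Function.comp_def]
    simp only [hHG, Fin.range_snoc_equiv, hgbar]
    rfl
  · rw [← conjTranspose_eq_transpose_of_trivial]
    exact .conjTranspose_mul_self _ <| mulVec_injective_iff_isUnit.mpr <|
      isUnit_nonsing_inv_iff.mpr <| (isUnit_iff_isUnit_det A).mpr hdet
end

section
/- Let g(x) = xᵀx − 2aᵀx + θ, gᵢ(x) = xᵀx − 2aᵢᵀx + θᵢ, i = 1,…,m, and suppose either rank{a₁−a, …, aₘ−a} < n, or rank{a₁−a, …, aₘ−a} = n and m = n. Then G(ℝⁿ)• is convex, where G(ℝⁿ) = {(−g(x), g₁(x), …, gₘ(x)) : x ∈ ℝⁿ} and S• denotes the set of convex combinations of pairs of points of S. -/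
open Matrix

private lemma dot_self_nonneg' {n : ℕ} (u : Fin n → ℝ) : 0 ≤ u ⬝ᵥ u :=
  Finset.sum_nonneg fun i _ => mul_self_nonneg (u i)

theorem stmt11 (n m : ℕ)
    (a : Fin n → ℝ) (aa : Fin m → (Fin n → ℝ)) (θ : ℝ) (θθ : Fin m → ℝ)
    (g : (Fin n → ℝ) → ℝ) (gg : Fin m → (Fin n → ℝ) → ℝ)
    (hg : ∀ x, g x = x ⬝ᵥ x - 2 * (a ⬝ᵥ x) + θ)
    (hgg : ∀ i x, gg i x = x ⬝ᵥ x - 2 * (aa i ⬝ᵥ x) + θθ i)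
    (hrank : Module.finrank ℝ (Submodule.span ℝ (Set.range fun i => aa i - a)) < n ∨
      (Module.finrank ℝ (Submodule.span ℝ (Set.range fun i => aa i - a)) = n ∧ m = n)) :
    Convex ℝ (bullet (Set.range fun x : Fin n → ℝ =>
      (Fin.cons (-(g x)) (fun i : Fin m => gg i x) : Fin (m + 1) → ℝ))) := by
  classical
  set φ : (Fin n → ℝ) → (Fin (m + 1) → ℝ) :=
    fun x => Fin.cons (-(g x)) (fun i : Fin m => gg i x) with hφ
  -- convexity of g
  have hGconv : ∀ (u v : Fin n → ℝ) (l : ℝ), 0 ≤ l → l ≤ 1 →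
      g (l • u + (1 - l) • v) ≤ l * g u + (1 - l) * g v := by
    intro u v l h0 h1
    have hd : 0 ≤ (u - v) ⬝ᵥ (u - v) := dot_self_nonneg' _
    have hcomm : u ⬝ᵥ v = v ⬝ᵥ u := dotProduct_comm u v
    simp only [hg, add_dotProduct, dotProduct_add, smul_dotProduct, dotProduct_smul,
      smul_eq_mul, sub_dotProduct, dotProduct_sub] at hd ⊢
    nlinarith [mul_nonneg (mul_nonneg h0 (by linarith : (0:ℝ) ≤ 1 - l)) hd]
  rcases Nat.eq_zero_or_pos n with hn | hn
  · -- n = 0 : the range is a singleton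
    subst hn
    have hall : ∀ x : Fin 0 → ℝ, x = fun i => i.elim0 := by
      intro x; funext i; exact i.elim0
    have hr : Set.range φ = {φ (fun i => i.elim0)} := by
      ext y
      constructor
      · rintro ⟨x, rfl⟩; rw [hall x]; rfl
      · rintro rfl; exact ⟨_, rfl⟩
    have hb : bullet (Set.range φ) = {φ (fun i => i.elim0)} := by
      rw [hr]
      ext z
      constructor
      · rintro ⟨u, rfl, v, rfl, l, h0, h1, rfl⟩
        simp only [Set.mem_singleton_iff]
        module
      · rintro rfl
        exact ⟨_, rfl, _, rfl, 1, zero_le_one, le_refl 1, by module⟩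
    rw [hb]; exact convex_singleton _
  · -- n ≥ 1 : membership criterion
    have crit : ∀ y : Fin (m + 1) → ℝ, y ∈ bullet (Set.range φ) ↔
        ∃ x : Fin n → ℝ, (∀ i : Fin m, y i.succ + y 0 = gg i x - g x) ∧ y 0 + g x ≤ 0 := by
      intro y
      constructor
      · rintro ⟨-, ⟨u, rfl⟩, -, ⟨v, rfl⟩, l, h0, h1, rfl⟩
        refine ⟨l • u + (1 - l) • v, ?_, ?_⟩
        · intro i
          simp only [Pi.add_apply, Pi.smul_apply, hφ, Fin.cons_succ, Fin.cons_zero,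
            smul_eq_mul]
          simp only [hg, hgg, add_dotProduct, dotProduct_add, smul_dotProduct,
            dotProduct_smul, smul_eq_mul]
          ring
        · have := hGconv u v l h0 h1
          simp only [Pi.add_apply, Pi.smul_apply, hφ, Fin.cons_zero, smul_eq_mul]
          linarith
      · rintro ⟨x, hlin, hle⟩
        set e : Fin n → ℝ := Pi.single (⟨0, hn⟩ : Fin n) 1 with he
        have hee : e ⬝ᵥ e = 1 := by
          simp [dotProduct, he, Pi.single_apply]
        set s : ℝ := Real.sqrt (-(y 0) - g x) with hs
        have hs2 : s * s = -(y 0) - g x := Real.mul_self_sqrt (by linarith)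
        refine ⟨φ (x + s • e), ⟨_, rfl⟩, φ (x - s • e), ⟨_, rfl⟩, 1/2, by norm_num,
          by norm_num, ?_⟩
        have hs2' : s * s = -(y 0) - (x ⬝ᵥ x - 2 * (a ⬝ᵥ x) + θ) := by rw [hs2, hg]
        funext j
        refine Fin.cases ?_ ?_ j
        · simp only [Pi.add_apply, Pi.smul_apply, hφ, Fin.cons_zero, smul_eq_mul]
          simp only [hg, add_dotProduct, dotProduct_add, sub_dotProduct, dotProduct_sub,
            smul_dotProduct, dotProduct_smul, smul_eq_mul]
          simp only [hee]
          linear_combination hs2'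
        · intro i
          have hi := hlin i
          simp only [Pi.add_apply, Pi.smul_apply, hφ, Fin.cons_succ, smul_eq_mul]
          simp only [hg, hgg] at hi ⊢
          simp only [add_dotProduct, dotProduct_add, sub_dotProduct, dotProduct_sub,
            smul_dotProduct, dotProduct_smul, smul_eq_mul] at hi ⊢
          simp only [hee]
          linear_combination hi - hs2'
    -- conclude convexity from criterion
    intro p hp q hq κ κ' hκ hκ' hsum
    rcases (crit p).1 hp with ⟨xp, hp1, hp2⟩
    rcases (crit q).1 hq with ⟨xq, hq1, hq2⟩
    have hκ'eq : κ' = 1 - κ := by linarith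
    subst hκ'eq
    refine (crit _).2 ⟨κ • xp + (1 - κ) • xq, ?_, ?_⟩
    · intro i
      have h1 := hp1 i
      have h2 := hq1 i
      simp only [Pi.add_apply, Pi.smul_apply, smul_eq_mul]
      simp only [hg, hgg] at h1 h2 ⊢
      simp only [add_dotProduct, dotProduct_add, smul_dotProduct, dotProduct_smul,
        smul_eq_mul] at h1 h2 ⊢
      nlinarith [h1, h2]
    · have := hGconv xp xq κ hκ (by linarith)
      simp only [Pi.add_apply, Pi.smul_apply, smul_eq_mul]
      nlinarith [hp2, hq2, this, hκ, hκ']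
end

section
/- Let Λ = {(z₀, …, zₘ) ∈ ℝ^{m+1} : z₀ < 0 and zᵢ ≤ 0 for i = 1,…,m}. Suppose rank{a₁−a, …, aₘ−a} = n and m = n. If G(ℝⁿ) ∩ Λ = ∅, then G(ℝⁿ)• ∩ Λ = ∅, where G(x) = (−g(x), g₁(x), …, gₘ(x)) with g(x) = xᵀx − 2aᵀx + θ and gᵢ(x) = xᵀx − 2aᵢᵀx + θᵢ. -/
/-!
For every `b, c` the function `q x = xᵀx - 2bᵀx + c` satisfies
`l q(x) + (1-l) q(y) = q(z) + C` with `z = l x + (1-l) y` and `C = l(1-l)‖x-y‖² ≥ 0`, so a point of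
`G(ℝⁿ)•` in `Λ` gives a `z` with `g(z) + C > 0` and `gᵢ(z) + C ≤ 0`. As the `aᵢ - a` form a basis,
there is `d` with `(aᵢ - a)ᵀd = 1` for all `i`. Moving from `z` to `z + t d` adds the same quantity
`t²‖d‖² + 2t(z-a)ᵀd` to `g` and, up to an extra `-2t`, to every `gᵢ`; taking `t ≥ 0` with this
quantity equal to `C` yields a point of `G(ℝⁿ) ∩ Λ`.
-/

open Matrix

namespace SphereSystem

variable {ι κ : Type*} [Fintype ι]

def quad (b : ι → ℝ) (c : ℝ) (x : ι → ℝ) : ℝ := x ⬝ᵥ x - 2 * (b ⬝ᵥ x) + c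

theorem mul_quad_add_mul_quad (b : ι → ℝ) (c l : ℝ) (x y : ι → ℝ) :
    l * quad b c x + (1 - l) * quad b c y =
      quad b c (l • x + (1 - l) • y) + l * (1 - l) * ((x - y) ⬝ᵥ (x - y)) := by
  simp only [quad, dotProduct_add, add_dotProduct, dotProduct_smul, smul_dotProduct, smul_eq_mul,
    dotProduct_sub, sub_dotProduct, dotProduct_comm y x]
  ring

theorem quad_add_smul (a b : ι → ℝ) (c t : ℝ) (z d : ι → ℝ) :
    quad b c (z + t • d) =
      quad b c z + (t ^ 2 * (d ⬝ᵥ d) + 2 * t * ((z - a) ⬝ᵥ d)) - 2 * t * ((b - a) ⬝ᵥ d) := by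
  simp only [quad, dotProduct_add, add_dotProduct, dotProduct_smul, smul_dotProduct, smul_eq_mul,
    sub_dotProduct, dotProduct_comm d z]
  ring

theorem exists_nonneg_quadratic_eq {A B C : ℝ} (hA : 0 < A) (hC : 0 ≤ C) :
    ∃ t, 0 ≤ t ∧ A * t ^ 2 + B * t = C := by
  have hdisc : 0 ≤ B ^ 2 + 4 * A * C := by positivity
  set s := √(B ^ 2 + 4 * A * C)
  have hs : s ^ 2 = B ^ 2 + 4 * A * C := Real.sq_sqrt hdisc
  have hBs : B ≤ s := (le_abs_self B).trans (Real.abs_le_sqrt (by linarith [mul_nonneg hA.le hC]))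
  refine ⟨(s - B) / (2 * A), div_nonneg (by linarith) (by linarith), ?_⟩
  field_simp
  linear_combination hs

theorem exists_dotProduct_eq_of_finrank_span [DecidableEq ι] (v : ι → ι → ℝ)
    (hv : Module.finrank ℝ (Submodule.span ℝ (Set.range v)) = Fintype.card ι) (w : ι → ℝ) :
    ∃ d, ∀ i, v i ⬝ᵥ d = w i := by
  have hspan : Submodule.span ℝ (Set.range v) = ⊤ :=
    Submodule.eq_top_of_finrank_eq (by rw [Module.finrank_fintype_fun_eq_card]; exact hv)
  have hsurj : Function.Surjective (Matrix.of v).vecMul := fun u => by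
    have hu : u ∈ LinearMap.range (Matrix.of v).vecMulLinear := by
      rw [range_vecMulLinear]
      change u ∈ Submodule.span ℝ (Set.range v)
      rw [hspan]
      trivial
    exact hu
  obtain ⟨d, hd⟩ := Matrix.mulVec_surjective_iff_isUnit.mpr
    (Matrix.vecMul_surjective_iff_isUnit.mp hsurj) w
  exact ⟨d, congr_fun hd⟩

theorem exists_quad_pos_forall_quad_nonpos (a : ι → ℝ) (aa : κ → ι → ℝ) (θ : ℝ) (θθ : κ → ℝ)
    {x y d : ι → ℝ} {l : ℝ} (hl0 : 0 ≤ l) (hl1 : l ≤ 1) (hd0 : d ≠ 0)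
    (hd : ∀ i, (aa i - a) ⬝ᵥ d = 1) (hpos : 0 < l * quad a θ x + (1 - l) * quad a θ y)
    (hnonpos : ∀ i, l * quad (aa i) (θθ i) x + (1 - l) * quad (aa i) (θθ i) y ≤ 0) :
    ∃ p, 0 < quad a θ p ∧ ∀ i, quad (aa i) (θθ i) p ≤ 0 := by
  set z := l • x + (1 - l) • y
  set C := l * (1 - l) * ((x - y) ⬝ᵥ (x - y))
  have hC : 0 ≤ C := mul_nonneg (mul_nonneg hl0 (sub_nonneg.2 hl1)) (by
    simpa using dotProduct_self_star_nonneg (x - y))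
  have hdd : 0 < d ⬝ᵥ d := by simpa using dotProduct_self_star_pos_iff.mpr hd0
  obtain ⟨t, ht0, ht⟩ := exists_nonneg_quadratic_eq (B := 2 * ((z - a) ⬝ᵥ d)) hdd hC
  refine ⟨z + t • d, ?_, fun i => ?_⟩
  · rw [quad_add_smul a, sub_self, zero_dotProduct]
    linarith [mul_quad_add_mul_quad a θ l x y]
  · rw [quad_add_smul a, hd i]
    linarith [mul_quad_add_mul_quad (aa i) (θθ i) l x y, hnonpos i]

end SphereSystem

open SphereSystem

theorem stmt12 (n m : ℕ)
    (a : Fin n → ℝ) (aa : Fin m → (Fin n → ℝ)) (θ : ℝ) (θθ : Fin m → ℝ)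
    (g : (Fin n → ℝ) → ℝ) (gg : Fin m → (Fin n → ℝ) → ℝ)
    (hg : ∀ x, g x = x ⬝ᵥ x - 2 * (a ⬝ᵥ x) + θ)
    (hgg : ∀ i x, gg i x = x ⬝ᵥ x - 2 * (aa i ⬝ᵥ x) + θθ i)
    (hrank : Module.finrank ℝ (Submodule.span ℝ (Set.range fun i => aa i - a)) = n)
    (hmn : m = n)
    (Λ : Set (Fin (m + 1) → ℝ))
    (hΛ : Λ = {z | z 0 < 0 ∧ ∀ i : Fin m, z i.succ ≤ 0})
    (G : (Fin n → ℝ) → (Fin (m + 1) → ℝ))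
    (hG : ∀ x, G x = Fin.cons (-(g x)) (fun i : Fin m => gg i x))
    (hdisj : Set.range G ∩ Λ = ∅) :
    bullet (Set.range G) ∩ Λ = ∅ := by
  subst hmn
  obtain rfl : g = quad a θ := funext hg
  obtain rfl : gg = fun i => quad (aa i) (θθ i) := funext fun i => funext (hgg i)
  rw [Set.eq_empty_iff_forall_notMem]
  rintro _ ⟨⟨_, ⟨x, rfl⟩, _, ⟨y, rfl⟩, l, hl0, hl1, rfl⟩, hw⟩
  by_cases hxy : x = y
  · rw [hxy, Convex.combo_self (add_sub_cancel l 1)] at hw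
    exact hdisj.subset ⟨⟨y, rfl⟩, hw⟩
  obtain ⟨i₀, -⟩ := Function.ne_iff.mp hxy
  obtain ⟨d, hd⟩ := exists_dotProduct_eq_of_finrank_span (fun i => aa i - a)
    (by simpa using hrank) fun _ => 1
  have hd0 : d ≠ 0 := by rintro rfl; simpa using hd i₀
  simp only [hΛ, Set.mem_ofPred_eq, Pi.add_apply, Pi.smul_apply, hG, Fin.cons_zero,
    Fin.cons_succ, smul_eq_mul] at hw
  obtain ⟨p, hp, hpi⟩ := exists_quad_pos_forall_quad_nonpos a aa θ θθ hl0 hl1 hd0 hd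
    (by linarith [hw.1]) hw.2
  refine hdisj.subset ⟨⟨p, rfl⟩, ?_⟩
  simpa [hΛ, hG] using ⟨hp, hpi⟩
end

section
/- Extension of the S-Lemma: Let g(x) = xᵀx − 2aᵀx + θ and gᵢ(x) = xᵀx − 2aᵢᵀx + θᵢ, i = 1,…,m. Assume there exists x̄ with gᵢ(x̄) < 0 for all i, and assume either rank{a₁−a, …, aₘ−a} < n, or rank{a₁−a, …, aₘ−a} = n and m = n. Then the system {g(x) > 0, gᵢ(x) ≤ 0 for all i} has no solution if and only if there exist μᵢ ≥ 0, i = 1,…,m, such that −g(x) + Σᵢ μᵢ gᵢ(x) ≥ 0 for all x ∈ ℝⁿ. -/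
/-!
Replace `x ⬝ᵥ x` by a new variable `y`. Then `g` and the `gᵢ` become affine functions of `(x, y)`
on the convex set `x ⬝ᵥ x ≤ y`, and the convex theorem of alternatives (separation of `0` from the
open convex set of values dominated by `(g, gᵢ)`, with Slater's point forcing the multiplier of `g`
to be positive) produces the multipliers `μᵢ` for this relaxed system.

The relaxation is exact: the rank hypothesis gives a direction `d ≠ 0` with `(aᵢ - a) ⬝ᵥ d ≥ 0`
for every `i`. Moving from `x` along `d` until `x ⬝ᵥ x - 2 * (a ⬝ᵥ x)` has grown by the slack
`y - x ⬝ᵥ x` lands on the paraboloid with the same value of `g` and no larger value of any `gᵢ`,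
since `gᵢ - g` is affine and nonincreasing along `d`.
-/

open Matrix

theorem nonneg_of_forall_pos_le_add_mul {a b : ℝ} (h : ∀ s : ℝ, 0 < s → 0 ≤ a + s * b) :
    0 ≤ a ∧ 0 ≤ b := by
  constructor
  · by_contra! ha
    rcases le_or_gt b 0 with hb | hb
    · linarith [h 1 one_pos]
    · have := h (-a / (2 * b)) (div_pos (by linarith) (by linarith))
      have e : -a / (2 * b) * b = -a / 2 := by field_simp
      linarith
  · by_contra! hb
    have := h ((|a| + 1) / -b) (div_pos (by positivity) (by linarith))
    have e : (|a| + 1) / -b * b = -(|a| + 1) := by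
      rw [div_mul_eq_mul_div, mul_div_assoc, div_neg, div_self hb.ne, mul_neg, mul_one]
    linarith [le_abs_self a]

section Duality

variable {E ι : Type*} {S : Set E} {f : E → ℝ} {c : ι → E → ℝ}

theorem ContinuousLinearMap.apply_eq_fst_mul_add_sum [Fintype ι] [DecidableEq ι]
    (φ : ℝ × (ι → ℝ) →L[ℝ] ℝ) (z : ℝ × (ι → ℝ)) :
    φ z = φ (1, 0) * z.1 + ∑ i, φ (0, Pi.single i 1) * z.2 i := by
  have hz : z = z.1 • ((1 : ℝ), (0 : ι → ℝ)) +
      ∑ i, z.2 i • ((0 : ℝ), (Pi.single i 1 : ι → ℝ)) := by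
    ext <;> simp [Prod.fst_sum, Prod.snd_sum, Finset.sum_apply, Pi.single_apply]
  conv_lhs => rw [hz, map_add, map_smul, map_sum]
  simp only [map_smul, smul_eq_mul, mul_comm]

variable (S f c) in
def dominatedValues : Set (ℝ × (ι → ℝ)) :=
  {z | ∃ p ∈ S, z.1 < f p ∧ ∀ i, c i p < z.2 i}

theorem isOpen_dominatedValues [Finite ι] : IsOpen (dominatedValues S f c) := by
  have : dominatedValues S f c =
      ⋃ p ∈ S, Set.Iio (f p) ×ˢ Set.univ.pi fun i => Set.Ioi (c i p) := by
    ext z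
    simp only [dominatedValues, Set.mem_ofPred_eq, Set.mem_iUnion, Set.mem_prod, Set.mem_Iio,
      Set.mem_pi, Set.mem_univ, true_implies, Set.mem_Ioi, exists_prop]
  rw [this]
  exact isOpen_biUnion fun p _ =>
    isOpen_Iio.prod (isOpen_set_pi Set.finite_univ fun i _ => isOpen_Ioi)

theorem nonneg_of_pos_on_dominatedValues {φ : ℝ × (ι → ℝ) →L[ℝ] ℝ}
    (hφ : ∀ z ∈ dominatedValues S f c, 0 < φ z) {p : E} (hp : p ∈ S) {k : ℝ × (ι → ℝ)}
    (hk₀ : k.1 < 0) (hk : ∀ i, 0 < k.2 i) : 0 ≤ φ (f p, fun i => c i p) ∧ 0 ≤ φ k := by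
  refine nonneg_of_forall_pos_le_add_mul fun s hs => ?_
  rw [← smul_eq_mul, ← map_smul, ← map_add]
  refine (hφ _ ⟨p, hp, ?_, fun i => ?_⟩).le
  · simp only [Prod.fst_add, Prod.smul_fst, smul_eq_mul]
    nlinarith
  · simp only [Prod.snd_add, Prod.smul_snd, Pi.add_apply, Pi.smul_apply, smul_eq_mul]
    nlinarith [hk i]

theorem nonneg_on_orthant_of_pos_on_dominatedValues [DecidableEq ι] {φ : ℝ × (ι → ℝ) →L[ℝ] ℝ}
    (hφ : ∀ z ∈ dominatedValues S f c, 0 < φ z) {p : E} (hp : p ∈ S) :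
    0 ≤ φ (-1, 0) ∧ ∀ i, 0 ≤ φ (0, Pi.single i 1) := by
  set e : ℝ × (ι → ℝ) := (-1, fun _ => 1)
  have of_add_smul : ∀ k : ℝ × (ι → ℝ),
      (∀ t : ℝ, 0 < t → (e + t • k).1 < 0 ∧ ∀ i, 0 < (e + t • k).2 i) → 0 ≤ φ k := by
    intro k hk
    refine (nonneg_of_forall_pos_le_add_mul (a := φ e) fun t ht => ?_).2
    rw [← smul_eq_mul, ← map_smul, ← map_add]
    exact (nonneg_of_pos_on_dominatedValues hφ hp (hk t ht).1 (hk t ht).2).2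
  refine ⟨of_add_smul _ fun t ht => ⟨?_, fun i => ?_⟩,
    fun i => of_add_smul _ fun t ht => ⟨?_, fun j => ?_⟩⟩
  · simp only [e, Prod.fst_add, Prod.smul_fst, smul_eq_mul]
    linarith
  · simp [e]
  · simp [e]
  · rcases eq_or_ne j i with rfl | hj
    · simp [e]
      linarith
    · simp [e, hj]

variable [AddCommGroup E] [Module ℝ E]

theorem convex_dominatedValues (hf : ConcaveOn ℝ S f) (hc : ∀ i, ConvexOn ℝ S (c i)) :
    Convex ℝ (dominatedValues S f c) := by
  rintro z ⟨p, hp, hzp, hcp⟩ z' ⟨p', hp', hzp', hcp'⟩ a b ha hb hab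
  have combo_lt : ∀ {x x' y y' : ℝ}, x < y → x' < y' → a * x + b * x' < a * y + b * y' := by
    intro x x' y y' h h'
    have := convex_Iio (0 : ℝ) (sub_neg.2 h) (sub_neg.2 h') ha hb hab
    simp only [smul_eq_mul, Set.mem_Iio] at this
    linarith
  refine ⟨a • p + b • p', hf.1 hp hp' ha hb hab, ?_, fun i => ?_⟩
  · exact (combo_lt hzp hzp').trans_le (hf.2 hp hp' ha hb hab)
  · exact (hc i |>.2 hp hp' ha hb hab).trans_lt (combo_lt (hcp i) (hcp' i))

theorem exists_fritzJohn_multipliers [Fintype ι] (hf : ConcaveOn ℝ S f)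
    (hc : ∀ i, ConvexOn ℝ S (c i)) (hS : S.Nonempty) (hns : ¬ ∃ p ∈ S, 0 < f p ∧ ∀ i, c i p < 0) :
    ∃ (ν₀ : ℝ) (ν : ι → ℝ), 0 ≤ ν₀ ∧ (∀ i, 0 ≤ ν i) ∧ (ν₀ ≠ 0 ∨ ν ≠ 0) ∧
      ∀ p ∈ S, ν₀ * f p ≤ ∑ i, ν i * c i p := by
  classical
  obtain ⟨φ, hφ⟩ := geometric_hahn_banach_point_open (x := 0)
    (convex_dominatedValues hf hc) isOpen_dominatedValues
    fun ⟨p, hp, h0, hc0⟩ => hns ⟨p, hp, h0, hc0⟩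
  rw [map_zero] at hφ
  obtain ⟨p₀, hp₀⟩ := hS
  obtain ⟨hν₀, hν⟩ := nonneg_on_orthant_of_pos_on_dominatedValues hφ hp₀
  have hφ₀ : φ (-1, 0) = -φ (1, 0) := by rw [← map_neg, Prod.neg_mk, neg_zero]
  refine ⟨φ (-1, 0), fun i => φ (0, Pi.single i 1), hν₀, hν, ?_, fun p hp => ?_⟩
  · by_contra! h
    have hmem : ((f p₀ - 1, fun i => c i p₀ + 1) : ℝ × (ι → ℝ)) ∈ dominatedValues S f c :=
      ⟨p₀, hp₀, by simp, fun i => by simp⟩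
    have := hφ _ hmem
    rw [φ.apply_eq_fst_mul_add_sum] at this
    have h₁ : φ (1, 0) = 0 := by linarith [h.1]
    simp only [h₁, fun i => congrFun h.2 i, Pi.zero_apply, zero_mul, Finset.sum_const_zero,
      add_zero] at this
    exact this.false
  · have := (nonneg_of_pos_on_dominatedValues hφ hp (k := (-1, fun _ => 1)) (by simp)
      (fun i => by simp)).1
    rw [φ.apply_eq_fst_mul_add_sum] at this
    rw [hφ₀]
    dsimp only at this ⊢
    linarith

theorem exists_lagrange_multipliers_of_slater [Fintype ι] (hf : ConcaveOn ℝ S f)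
    (hc : ∀ i, ConvexOn ℝ S (c i)) (hslater : ∃ p ∈ S, ∀ i, c i p < 0)
    (hns : ¬ ∃ p ∈ S, 0 < f p ∧ ∀ i, c i p < 0) :
    ∃ μ : ι → ℝ, (∀ i, 0 ≤ μ i) ∧ ∀ p ∈ S, f p ≤ ∑ i, μ i * c i p := by
  obtain ⟨pbar, hpbar, hneg⟩ := hslater
  obtain ⟨ν₀, ν, hν₀, hν, hne, hle⟩ := exists_fritzJohn_multipliers hf hc ⟨pbar, hpbar⟩ hns
  have hpos : 0 < ν₀ := by
    refine hν₀.lt_of_ne' fun h0 => ?_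
    obtain ⟨i, hi⟩ := Function.ne_iff.1 (hne.resolve_left (not_not.2 h0))
    have hsum : ∑ i, ν i * c i pbar < 0 :=
      Finset.sum_neg' (fun j _ => mul_nonpos_of_nonneg_of_nonpos (hν j) (hneg j).le)
        ⟨i, Finset.mem_univ i, mul_neg_of_pos_of_neg ((hν i).lt_of_ne' hi) (hneg i)⟩
    linarith [hle pbar hpbar, h0 ▸ zero_mul (f pbar)]
  refine ⟨fun i => ν i / ν₀, fun i => div_nonneg (hν i) hpos.le, fun p hp => ?_⟩
  simp_rw [div_mul_eq_mul_div, ← Finset.sum_div]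
  rw [le_div_iff₀ hpos, mul_comm]
  exact hle p hp

end Duality

section Paraboloid

variable {ι : Type*} [Fintype ι]

theorem dotProduct_self_nonneg (v : ι → ℝ) : 0 ≤ v ⬝ᵥ v :=
  Fintype.sum_nonneg fun i => mul_self_nonneg (v i)

theorem convex_setOf_dotProduct_self_le :
    Convex ℝ {p : (ι → ℝ) × ℝ | p.1 ⬝ᵥ p.1 ≤ p.2} := by
  rintro ⟨x, y⟩ (hxy : x ⬝ᵥ x ≤ y) ⟨x', y'⟩ (hxy' : x' ⬝ᵥ x' ≤ y') a b ha hb hab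
  show (a • x + b • x') ⬝ᵥ (a • x + b • x') ≤ a * y + b * y'
  have hsq := dotProduct_self_nonneg (x - x')
  simp only [dotProduct_add, add_dotProduct, dotProduct_smul, smul_dotProduct, dotProduct_sub,
    sub_dotProduct, smul_eq_mul, dotProduct_comm x' x] at hsq ⊢
  obtain rfl : b = 1 - a := by linarith
  nlinarith [mul_nonneg (mul_nonneg ha hb) hsq]

/-- Replacing `x ⬝ᵥ x` by a free variable `y` turns `x ⬝ᵥ x - 2 * (c ⬝ᵥ x) + k` into an affine
function of `(x, y)`, which agrees with the quadratic on the graph `y = x ⬝ᵥ x`. -/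
def linearizedQuadratic (c : ι → ℝ) (k : ℝ) (p : (ι → ℝ) × ℝ) : ℝ :=
  p.2 - 2 * (c ⬝ᵥ p.1) + k

theorem linearizedQuadratic_combo (c : ι → ℝ) (k : ℝ) (p q : (ι → ℝ) × ℝ) {a b : ℝ}
    (hab : a + b = 1) :
    linearizedQuadratic c k (a • p + b • q) =
      a * linearizedQuadratic c k p + b * linearizedQuadratic c k q := by
  simp only [linearizedQuadratic, Prod.fst_add, Prod.snd_add, Prod.smul_fst, Prod.smul_snd,
    dotProduct_add, dotProduct_smul, smul_eq_mul]
  linear_combination k * hab.symm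

theorem convexOn_linearizedQuadratic {s : Set ((ι → ℝ) × ℝ)} (hs : Convex ℝ s)
    (c : ι → ℝ) (k : ℝ) : ConvexOn ℝ s (linearizedQuadratic c k) :=
  ⟨hs, fun p _ q _ _ _ _ _ hab => (linearizedQuadratic_combo c k p q hab).le⟩

theorem concaveOn_linearizedQuadratic {s : Set ((ι → ℝ) × ℝ)} (hs : Convex ℝ s)
    (c : ι → ℝ) (k : ℝ) : ConcaveOn ℝ s (linearizedQuadratic c k) :=
  ⟨hs, fun p _ q _ _ _ _ _ hab => (linearizedQuadratic_combo c k p q hab).ge⟩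

theorem exists_nonneg_mul_sq_add_eq {A B C : ℝ} (hA : 0 < A) (hC : 0 ≤ C) :
    ∃ t : ℝ, 0 ≤ t ∧ A * t ^ 2 + 2 * B * t = C := by
  set s := √(B ^ 2 + A * C)
  have hs : s ^ 2 = B ^ 2 + A * C := Real.sq_sqrt (by positivity)
  have hBs : B ≤ s := (le_abs_self B).trans (Real.abs_le_sqrt (by nlinarith))
  refine ⟨(s - B) / A, div_nonneg (sub_nonneg.2 hBs) hA.le, ?_⟩
  have ht : A * ((s - B) / A) ^ 2 + 2 * B * ((s - B) / A) = (s ^ 2 - B ^ 2) / A := by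
    field_simp; ring
  rw [ht, hs]
  field_simp
  ring

theorem exists_linearizedQuadratic_eq_and_le {a d : ι → ℝ} (θ : ℝ) (hd : d ≠ 0)
    {p : (ι → ℝ) × ℝ} (hp : p.1 ⬝ᵥ p.1 ≤ p.2) :
    ∃ x, linearizedQuadratic a θ (x, x ⬝ᵥ x) = linearizedQuadratic a θ p ∧
      ∀ c k, 0 ≤ (c - a) ⬝ᵥ d →
        linearizedQuadratic c k (x, x ⬝ᵥ x) ≤ linearizedQuadratic c k p := by
  have hdd : 0 < d ⬝ᵥ d := (dotProduct_self_nonneg d).lt_of_ne' (dotProduct_self_eq_zero.not.2 hd)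
  -- moving by `t • d` raises `x ⬝ᵥ x - 2 * (a ⬝ᵥ x)` by exactly the slack `y - x ⬝ᵥ x`
  obtain ⟨t, ht₀, ht⟩ := exists_nonneg_mul_sq_add_eq (B := (p.1 - a) ⬝ᵥ d) hdd (sub_nonneg.2 hp)
  have key : ∀ c k, linearizedQuadratic c k (p.1 + t • d, (p.1 + t • d) ⬝ᵥ (p.1 + t • d)) =
      linearizedQuadratic c k p - 2 * t * ((c - a) ⬝ᵥ d) := by
    intro c k
    simp only [linearizedQuadratic, dotProduct_add, add_dotProduct, dotProduct_smul,
      smul_dotProduct, sub_dotProduct, smul_eq_mul, dotProduct_comm d p.1] at ht ⊢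
    linear_combination ht
  refine ⟨p.1 + t • d, by rw [key, sub_self, zero_dotProduct, mul_zero, sub_zero], fun c k hc => ?_⟩
  rw [key]
  nlinarith [mul_nonneg ht₀ hc]

end Paraboloid

theorem exists_ne_zero_forall_nonneg_dotProduct {m n : ℕ} (v : Fin m → Fin n → ℝ) (hn : 0 < n)
    (h : Module.finrank ℝ (Submodule.span ℝ (Set.range v)) < n ∨ m = n) :
    ∃ d : Fin n → ℝ, d ≠ 0 ∧ ∀ i, 0 ≤ v i ⬝ᵥ d := by
  by_cases hker : LinearMap.ker (Matrix.of v).mulVecLin = ⊥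
  · have hinj := LinearMap.ker_eq_bot.1 hker
    rcases h with hlt | rfl
    · have hrank : (Matrix.of v).rank = n := by
        rw [Matrix.rank, LinearMap.finrank_range_of_inj hinj, Module.finrank_fin_fun]
      rw [Matrix.rank_eq_finrank_span_row] at hrank
      exact absurd hrank hlt.ne
    · obtain ⟨d, hd⟩ := LinearMap.injective_iff_surjective.1 hinj 1
      refine ⟨d, ?_, fun i => (congrFun hd i).ge.trans' zero_le_one⟩
      rintro rfl
      simpa using congrFun hd ⟨0, hn⟩
  · obtain ⟨d, hd, hd0⟩ := Submodule.exists_mem_ne_zero_of_ne_bot hker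
    exact ⟨d, hd0, fun i => (congrFun (LinearMap.mem_ker.1 hd) i).ge⟩

theorem stmt14 (n m : ℕ)
    (a : Fin n → ℝ) (aa : Fin m → (Fin n → ℝ)) (θ : ℝ) (θθ : Fin m → ℝ)
    (g : (Fin n → ℝ) → ℝ) (gg : Fin m → (Fin n → ℝ) → ℝ)
    (hg : ∀ x, g x = x ⬝ᵥ x - 2 * (a ⬝ᵥ x) + θ)
    (hgg : ∀ i x, gg i x = x ⬝ᵥ x - 2 * (aa i ⬝ᵥ x) + θθ i)
    (hslater : ∃ xbar, ∀ i, gg i xbar < 0)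
    (hrank : Module.finrank ℝ (Submodule.span ℝ (Set.range fun i => aa i - a)) < n ∨
      (Module.finrank ℝ (Submodule.span ℝ (Set.range fun i => aa i - a)) = n ∧ m = n)) :
    (¬ ∃ x, 0 < g x ∧ ∀ i, gg i x ≤ 0) ↔
      ∃ μ : Fin m → ℝ, (∀ i, 0 ≤ μ i) ∧ ∀ x, 0 ≤ -g x + ∑ i, μ i * gg i x := by
  replace hg : ∀ x, g x = linearizedQuadratic a θ (x, x ⬝ᵥ x) := hg
  replace hgg : ∀ i x, gg i x = linearizedQuadratic (aa i) (θθ i) (x, x ⬝ᵥ x) := hgg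
  refine ⟨fun hns => ?_, fun ⟨μ, hμ, hcert⟩ ⟨x, hgx, hggx⟩ => ?_⟩
  · rcases Nat.eq_zero_or_pos n with rfl | hn
    · obtain rfl : m = 0 := by omega
      refine ⟨0, fun _ => le_rfl, fun x => ?_⟩
      simpa using not_lt.1 fun h => hns ⟨x, h, fun i => i.elim0⟩
    obtain ⟨d, hd, hda⟩ := exists_ne_zero_forall_nonneg_dotProduct (fun i => aa i - a) hn
      (hrank.imp_right And.right)
    have hS := convex_setOf_dotProduct_self_le (ι := Fin n)
    obtain ⟨xbar, hxbar⟩ := hslater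
    obtain ⟨μ, hμ, hle⟩ := exists_lagrange_multipliers_of_slater
      (concaveOn_linearizedQuadratic hS a θ)
      (fun i => convexOn_linearizedQuadratic hS (aa i) (θθ i))
      ⟨(xbar, xbar ⬝ᵥ xbar), le_refl (xbar ⬝ᵥ xbar), fun i => hgg i xbar ▸ hxbar i⟩
      fun ⟨p, hp, hfp, hcp⟩ => by
        obtain ⟨x, hxf, hxc⟩ := exists_linearizedQuadratic_eq_and_le θ hd hp
        exact hns ⟨x, hg x ▸ hxf ▸ hfp, fun i => hgg i x ▸ (hxc _ _ (hda i)).trans (hcp i).le⟩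
    refine ⟨μ, hμ, fun x => ?_⟩
    have := hle (x, x ⬝ᵥ x) (le_refl (x ⬝ᵥ x))
    simp only [hg, hgg]
    linarith
  · have : ∑ i, μ i * gg i x ≤ 0 :=
      Finset.sum_nonpos fun i _ => mul_nonpos_of_nonneg_of_nonpos (hμ i) (hggx i)
    linarith [hcert x]
end
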